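/- Let A be a Banach algebra such that A** has the I-w*w property, where I is the identity map on A. If A** (with first Arens product) is weakly amenable, then A is weakly amenable. -/

import Mathlib

set_option maxHeartbeats 1000000

open Filter Topology ContinuousLinearMap NormedSpace

namespace NormedSpace

/-- The topological dual of a seminormed space `E` (removed from Mathlib; restored with its
old meaning). -/
abbrev Dual (𝕜 : Type*) [NontriviallyNormedField 𝕜] (E : Type*) [SeminormedAddCommGroup E]
    [NormedSpace 𝕜 E] : Type _ :=
  E →L[𝕜] 𝕜

end NormedSpace

noncomputable section ArensSetup

/-- The adjoint (transpose) of a continuous linear map between normed spaces. -/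
def adjCLM {E F : Type*} [SeminormedAddCommGroup E] [NormedSpace ℝ E]
    [SeminormedAddCommGroup F] [NormedSpace ℝ F] (T : E →L[ℝ] F) :
    Dual ℝ F →L[ℝ] Dual ℝ E :=
  (ContinuousLinearMap.compL ℝ E F ℝ).flip T

@[simp] theorem adjCLM_apply {E F : Type*} [SeminormedAddCommGroup E] [NormedSpace ℝ E]
    [SeminormedAddCommGroup F] [NormedSpace ℝ F] (T : E →L[ℝ] F) (g : Dual ℝ F) (x : E) :
    adjCLM T g x = g (T x) := rfl

/-- One-step Arens-type adjoint of a bounded bilinear map: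
`ext1 β g' e = g' ∘ (β e)`. -/
def ext1 {E F G : Type*} [SeminormedAddCommGroup E] [NormedSpace ℝ E]
    [SeminormedAddCommGroup F] [NormedSpace ℝ F] [SeminormedAddCommGroup G] [NormedSpace ℝ G]
    (β : E →L[ℝ] F →L[ℝ] G) : Dual ℝ G →L[ℝ] E →L[ℝ] Dual ℝ F :=
  ((ContinuousLinearMap.compL ℝ F G ℝ).flip.comp β).flip

@[simp] theorem ext1_apply {E F G : Type*} [SeminormedAddCommGroup E] [NormedSpace ℝ E]
    [SeminormedAddCommGroup F] [NormedSpace ℝ F] [SeminormedAddCommGroup G] [NormedSpace ℝ G]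
    (β : E →L[ℝ] F →L[ℝ] G) (g' : Dual ℝ G) (e : E) (f : F) :
    ext1 β g' e f = g' (β e f) := rfl

/-- Triple adjoint: the (first) Arens extension of a bounded bilinear map to the
second duals. -/
def ext3 {E F G : Type*} [SeminormedAddCommGroup E] [NormedSpace ℝ E]
    [SeminormedAddCommGroup F] [NormedSpace ℝ F] [SeminormedAddCommGroup G] [NormedSpace ℝ G]
    (β : E →L[ℝ] F →L[ℝ] G) :
    Dual ℝ (Dual ℝ E) →L[ℝ] Dual ℝ (Dual ℝ F) →L[ℝ] Dual ℝ (Dual ℝ G) :=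
  ext1 (ext1 (ext1 β))

variable (A : Type*) [NonUnitalNormedRing A] [NormedSpace ℝ A]
  [SMulCommClass ℝ A A] [IsScalarTower ℝ A A] [CompleteSpace A]

/-- The first (left) Arens product on `A**`: `⟨a''b'', a'⟩ = ⟨a'', b''a'⟩`. -/
def fArens : Dual ℝ (Dual ℝ A) →L[ℝ] Dual ℝ (Dual ℝ A) →L[ℝ] Dual ℝ (Dual ℝ A) :=
  ext3 (ContinuousLinearMap.mul ℝ A)

/-- The second (right) Arens product on `A**`: `⟨a''∘b'', a'⟩ = ⟨b'', a'∘a''⟩`. -/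
def sArens : Dual ℝ (Dual ℝ A) →L[ℝ] Dual ℝ (Dual ℝ A) →L[ℝ] Dual ℝ (Dual ℝ A) :=
  (ext3 (ContinuousLinearMap.mul ℝ A).flip).flip

/-- `A` is Arens regular when the two Arens products on `A**` coincide. -/
def ArensRegular : Prop := fArens A = sArens A

variable {A}

/-- Weak-star to weak continuity for a map from the dual of `E` into `F`. -/
def WStarToWCont {E F : Type*} [SeminormedAddCommGroup E] [NormedSpace ℝ E]
    [SeminormedAddCommGroup F] [NormedSpace ℝ F] (f : Dual ℝ E → F) : Prop :=
  Continuous fun x : WeakDual ℝ E => toWeakSpace ℝ F (f (WeakDual.toStrongDual x))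

variable (A)

/-- The second adjoint `T'' : A** → A**` of `T : A → A`. -/
def secondAdj (T : A →L[ℝ] A) : Dual ℝ (Dual ℝ A) →L[ℝ] Dual ℝ (Dual ℝ A) :=
  adjCLM (adjCLM T)

/-- Left action of `A` on `A*`: `⟨a·a', b⟩ = ⟨a', ba⟩`. -/
def dualLeft : A →L[ℝ] Dual ℝ A →L[ℝ] Dual ℝ A :=
  (ext1 (ContinuousLinearMap.mul ℝ A).flip).flip

/-- Right action of `A` on `A*`: `⟨a'·a, b⟩ = ⟨a', ab⟩`. -/
def dualRight : Dual ℝ A →L[ℝ] A →L[ℝ] Dual ℝ A :=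
  ext1 (ContinuousLinearMap.mul ℝ A)

/-- Left action of `A**` (first Arens product) on `A***`. -/
def dualLeft2 : Dual ℝ (Dual ℝ A) →L[ℝ] Dual ℝ (Dual ℝ (Dual ℝ A)) →L[ℝ]
    Dual ℝ (Dual ℝ (Dual ℝ A)) :=
  (ext1 (fArens A).flip).flip

/-- Right action of `A**` (first Arens product) on `A***`. -/
def dualRight2 : Dual ℝ (Dual ℝ (Dual ℝ A)) →L[ℝ] Dual ℝ (Dual ℝ A) →L[ℝ]
    Dual ℝ (Dual ℝ (Dual ℝ A)) :=
  ext1 (fArens A)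

end ArensSetup

section BimoduleSetup

set_option maxHeartbeats 1000000

open Filter Topology ContinuousLinearMap NormedSpace

/-- A Banach `A`-bimodule: bounded bilinear left and right actions satisfying the
usual compatibility axioms. -/
structure BanachBimodule (A X : Type*) [NonUnitalNormedRing A] [NormedSpace ℝ A]
    [SMulCommClass ℝ A A] [IsScalarTower ℝ A A]
    [NormedAddCommGroup X] [NormedSpace ℝ X] [CompleteSpace X] where
  l : A →L[ℝ] X →L[ℝ] X
  r : X →L[ℝ] A →L[ℝ] X
  l_mul : ∀ a b x, l (a * b) x = l a (l b x)
  r_mul : ∀ x a b, r (r x a) b = r x (a * b)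
  l_r : ∀ a x b, l a (r x b) = r (l a x) b

variable {A X : Type*} [NonUnitalNormedRing A] [NormedSpace ℝ A]
  [SMulCommClass ℝ A A] [IsScalarTower ℝ A A] [CompleteSpace A]
  [NormedAddCommGroup X] [NormedSpace ℝ X] [CompleteSpace X]

/-- Left action of `A` on `X*`: `⟨a·f, x⟩ = ⟨f, x·a⟩`. -/
noncomputable def modDualLeft (M : BanachBimodule A X) : A →L[ℝ] Dual ℝ X →L[ℝ] Dual ℝ X :=
  (ext1 M.r.flip).flip

/-- Right action of `A` on `X*`: `⟨f·a, x⟩ = ⟨f, a·x⟩`. -/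
noncomputable def modDualRight (M : BanachBimodule A X) : Dual ℝ X →L[ℝ] A →L[ℝ] Dual ℝ X :=
  ext1 M.l

/-- Left action of `A**` on `X**` (first Arens extension). -/
noncomputable def modL2 (M : BanachBimodule A X) :
    Dual ℝ (Dual ℝ A) →L[ℝ] Dual ℝ (Dual ℝ X) →L[ℝ] Dual ℝ (Dual ℝ X) :=
  ext3 M.l

/-- Right action of `A**` on `X**` (first Arens extension); `modR2 M x'' a'' = x''a''`. -/
noncomputable def modR2 (M : BanachBimodule A X) :
    Dual ℝ (Dual ℝ X) →L[ℝ] Dual ℝ (Dual ℝ A) →L[ℝ] Dual ℝ (Dual ℝ X) :=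
  ext3 M.r

/-- Left action of `A**` on `X***`: `⟨a''·x''', x''⟩ = ⟨x''', x''a''⟩`. -/
noncomputable def modL3 (M : BanachBimodule A X) :
    Dual ℝ (Dual ℝ A) →L[ℝ] Dual ℝ (Dual ℝ (Dual ℝ X)) →L[ℝ] Dual ℝ (Dual ℝ (Dual ℝ X)) :=
  (ext1 (modR2 M).flip).flip

/-- Right action of `A**` on `X***`: `⟨x'''·a'', x''⟩ = ⟨x''', a''x''⟩`. -/
noncomputable def modR3 (M : BanachBimodule A X) :
    Dual ℝ (Dual ℝ (Dual ℝ X)) →L[ℝ] Dual ℝ (Dual ℝ A) →L[ℝ] Dual ℝ (Dual ℝ (Dual ℝ X)) :=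
  ext1 (modL2 M)

end BimoduleSetup

section DerivationSetup

variable {B Y : Type*} [SeminormedAddCommGroup B] [NormedSpace ℝ B]
  [SeminormedAddCommGroup Y] [NormedSpace ℝ Y]

/-- `D` is a derivation with respect to the multiplication `m` and the module
actions `l`, `r`. -/
def IsDeriv (m : B →L[ℝ] B →L[ℝ] B) (l : B →L[ℝ] Y →L[ℝ] Y)
    (r : Y →L[ℝ] B →L[ℝ] Y) (D : B →L[ℝ] Y) : Prop :=
  ∀ a b, D (m a b) = l a (D b) + r (D a) b

/-- `D` is an inner derivation: `D a = a·y − y·a` for some fixed `y`. -/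
def IsInner (l : B →L[ℝ] Y →L[ℝ] Y) (r : Y →L[ℝ] B →L[ℝ] Y) (D : B →L[ℝ] Y) : Prop :=
  ∃ y, ∀ a, D a = l a y - r y a

/-- `D` is a `T-S`-derivation: `D(ab) = T(a)·D(b) + D(a)·S(b)`. -/
def IsTSDeriv (m : B →L[ℝ] B →L[ℝ] B) (l : B →L[ℝ] Y →L[ℝ] Y)
    (r : Y →L[ℝ] B →L[ℝ] Y) (T S : B →L[ℝ] B) (D : B →L[ℝ] Y) : Prop :=
  ∀ a b, D (m a b) = l (T a) (D b) + r (D a) (S b)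

/-- `D` is an inner `T-S`-derivation: `D a = T(a)·y − y·S(a)` for some fixed `y`. -/
def IsTSInner (l : B →L[ℝ] Y →L[ℝ] Y) (r : Y →L[ℝ] B →L[ℝ] Y)
    (T S : B →L[ℝ] B) (D : B →L[ℝ] Y) : Prop :=
  ∃ y, ∀ a, D a = l (T a) y - r y (S a)

end DerivationSetup

/-!
The second adjoint `D''` of a derivation `D : A → A*` satisfies `D''(a n) = a·D''(n) + D''(a)·n`
for `a ∈ A` and `n ∈ A**` by a direct computation. For fixed `n`, both sides of the identity
`D''(m n) = m·D''(n) + D''(m)·n` are weak-star continuous in `m ∈ A**` (the term `m·D''(n)` by the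
`I-w*w` property), and `A` is weak-star dense in `A**`, so `D''` is a derivation on `A**`. If
`F ∈ A***` implements it, the restriction of `F` to `A` implements `D`.
-/

section Goldstine

variable {𝕜 E : Type*} [NontriviallyNormedField 𝕜] [SeminormedAddCommGroup E] [NormedSpace 𝕜 E]

theorem exists_inclusionInDoubleDual_eqOn_finset (x : Dual 𝕜 (Dual 𝕜 E))
    (S : Finset (Dual 𝕜 E)) : ∃ a : E, ∀ f ∈ S, f a = x f := by
  classical
  let T : E →ₗ[𝕜] (S → 𝕜) := LinearMap.pi fun f => ((f : Dual 𝕜 E) : E →ₗ[𝕜] 𝕜)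
  suffices hx : (fun f : S => x f) ∈ LinearMap.range T by
    obtain ⟨a, ha⟩ := hx
    exact ⟨a, fun f hf => congrFun ha ⟨f, hf⟩⟩
  rw [← Subspace.forall_mem_dualAnnihilator_apply_eq_zero_iff]
  intro φ hφ
  rw [Submodule.mem_dualAnnihilator] at hφ
  have hφ_apply (v : S → 𝕜) : φ v = ∑ f, v f * φ (Pi.single f 1) := by
    conv_lhs => rw [← (LinearEquiv.piRing 𝕜 𝕜 S 𝕜).symm_apply_apply φ]
    simp only [LinearEquiv.piRing_symm_apply, LinearEquiv.piRing_apply, smul_eq_mul]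
  -- this combination is `φ ∘ T`, which vanishes
  have hcomb : ∑ f : S, φ (Pi.single f 1) • (f : Dual 𝕜 E) = 0 := by
    ext a
    have := hφ (T a) ⟨a, rfl⟩
    rw [hφ_apply] at this
    simpa [T, mul_comm] using this
  rw [hφ_apply]
  simpa [mul_comm] using congrArg x hcomb

theorem denseRange_toWeakDual_inclusionInDoubleDual :
    DenseRange fun a : E => StrongDual.toWeakDual (inclusionInDoubleDual 𝕜 E a) := by
  intro m
  have hbasis : (𝓝 m).HasBasis (topDualPairing 𝕜 (Dual 𝕜 E)).toSeminormFamily.basisSets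
      ((m + ·) '' ·) := by
    rw [← map_add_left_nhds_zero m]
    exact (LinearMap.hasBasis_weakBilin (E := Dual 𝕜 (Dual 𝕜 E))
      (topDualPairing 𝕜 (Dual 𝕜 E))).map _
  rw [mem_closure_iff_nhds_basis hbasis]
  intro U hU
  obtain ⟨S, r, hr, rfl⟩ := (SeminormFamily.basisSets_iff _).mp hU
  obtain ⟨a, ha⟩ := exists_inclusionInDoubleDual_eqOn_finset (WeakDual.toStrongDual m) S
  refine ⟨_, Set.mem_range_self a, _ - m, ?_, add_sub_cancel m _⟩
  refine (Seminorm.mem_ball_zero _).2 (Seminorm.finset_sup_apply_lt hr fun f hf => ?_)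
  change ‖f a - WeakDual.toStrongDual m f‖ < r
  simpa [ha f hf] using hr

theorem eq_of_weakStar_continuous_of_eq_on_inclusionInDoubleDual {X : Type*}
    [TopologicalSpace X] [T2Space X] {f g : Dual 𝕜 (Dual 𝕜 E) → X}
    (hf : Continuous fun m : WeakDual 𝕜 (Dual 𝕜 E) => f (WeakDual.toStrongDual m))
    (hg : Continuous fun m : WeakDual 𝕜 (Dual 𝕜 E) => g (WeakDual.toStrongDual m))
    (h : ∀ a, f (inclusionInDoubleDual 𝕜 E a) = g (inclusionInDoubleDual 𝕜 E a)) : f = g :=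
  funext fun m => congrFun (denseRange_toWeakDual_inclusionInDoubleDual.equalizer hf hg
    (funext h)) (StrongDual.toWeakDual m)

end Goldstine

section Arens

variable {A : Type*} [NonUnitalNormedRing A] [NormedSpace ℝ A]
  [SMulCommClass ℝ A A] [IsScalarTower ℝ A A]

local notation "ι" => inclusionInDoubleDual ℝ A

theorem fArens_inclusionInDoubleDual (a b : A) : fArens A (ι a) (ι b) = ι (a * b) := by
  ext; rfl

namespace IsDeriv

variable {D : A →L[ℝ] Dual ℝ A} (hD : IsDeriv (mul ℝ A) (dualLeft A) (dualRight A) D)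
include hD

theorem secondAdj_fArens_inclusionInDoubleDual (a : A) (n : Dual ℝ (Dual ℝ A)) :
    adjCLM (adjCLM D) (fArens A (ι a) n)
      = dualLeft2 A (ι a) (adjCLM (adjCLM D) n) + dualRight2 A (adjCLM (adjCLM D) (ι a)) n := by
  ext x''
  change n (ext1 (mul ℝ A) (adjCLM D x'') a)
      = n (adjCLM D (fArens A x'' (ι a))) + n (ext1 (ext1 (mul ℝ A)) x'' (D a))
  rw [← map_add]
  congr 1
  ext b
  change x'' (D (mul ℝ A a b)) = x'' (dualLeft A a (D b)) + x'' (dualRight A (D a) b)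
  rw [← map_add, hD a b]

theorem isDeriv_secondAdj
    (hw : ∀ a'' : Dual ℝ (Dual ℝ A), WStarToWCont (fun b'' => fArens A a'' b'')) :
    IsDeriv (fArens A) (dualLeft2 A) (dualRight2 A) (adjCLM (adjCLM D)) := by
  intro m n
  ext x''
  set G := adjCLM (adjCLM D)
  suffices hfun : (fun m => G (fArens A m n) x'')
      = fun m => dualLeft2 A m (G n) x'' + dualRight2 A (G m) n x'' from congrFun hfun m
  refine eq_of_weakStar_continuous_of_eq_on_inclusionInDoubleDual ?_ ?_ fun a => ?_
  -- `G (m n) x'' = m (n · D' x'')` and `(G m · n) x'' = m (D' (n x''))` are evaluations of `m`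
  · exact WeakDual.eval_continuous (ext1 (ext1 (mul ℝ A)) n (adjCLM D x''))
  · refine .add ?_ (WeakDual.eval_continuous (adjCLM D (fArens A n x'')))
    -- `(m · G n)(x'') = G n (x'' m)`, weak-star continuous in `m` by the `I-w*w` property
    exact (WeakBilin.eval_continuous _ (G n)).comp (hw x'')
  · exact congr($(hD.secondAdj_fArens_inclusionInDoubleDual a n) x'')

end IsDeriv

theorem isInner_of_isInner_secondAdj {D : A →L[ℝ] Dual ℝ A}
    (h : IsInner (dualLeft2 A) (dualRight2 A) (adjCLM (adjCLM D))) :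
    IsInner (dualLeft A) (dualRight A) D := by
  obtain ⟨F, hF⟩ := h
  refine ⟨adjCLM ι F, fun a => ?_⟩
  ext b
  have hab := congr($(hF (ι a)) (ι b))
  change D a b = F (fArens A (ι b) (ι a)) - F (fArens A (ι a) (ι b)) at hab
  rwa [fArens_inclusionInDoubleDual, fArens_inclusionInDoubleDual] at hab

end Arens

section Statements
set_option maxHeartbeats 1000000
open Filter Topology ContinuousLinearMap NormedSpace

variable {A : Type*} [NonUnitalNormedRing A] [NormedSpace ℝ A]
  [SMulCommClass ℝ A A] [IsScalarTower ℝ A A] [CompleteSpace A]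

/-- If `A**` has the `I-w*w` property and `A**` is weakly amenable, then `A` is weakly
amenable. -/
theorem weaklyAmenable_of_bidual
    (hw : ∀ a'' : Dual ℝ (Dual ℝ A), WStarToWCont (fun b'' => fArens A a'' b''))
    (hAm : ∀ G : Dual ℝ (Dual ℝ A) →L[ℝ] Dual ℝ (Dual ℝ (Dual ℝ A)),
      IsDeriv (fArens A) (dualLeft2 A) (dualRight2 A) G →
      IsInner (dualLeft2 A) (dualRight2 A) G) :
    ∀ D : A →L[ℝ] Dual ℝ A,
      IsDeriv (ContinuousLinearMap.mul ℝ A) (dualLeft A) (dualRight A) D →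
      IsInner (dualLeft A) (dualRight A) D :=
  fun _ hD => isInner_of_isInner_secondAdj (hAm _ (hD.isDeriv_secondAdj hw))

end Statements
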